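/- Let X be a locally complete ordered set. A morphism f : (α_j)_{j∈J} → (β_k)_{k∈K} in Fam(X) is an effective descent morphism if and only if f is a descent morphism and, for every family (σ_j)_{j∈J} with σ_j ≤ α_j for all j satisfying σ_j ∧ α_i ≅ α_j ∧ σ_i for all k ∈ K and all i, j ∈ f⁻¹(k), one has α_j ∧ ⋁_{i∈f⁻¹(k)} σ_i ≅ σ_j for all k ∈ K and all j ∈ f⁻¹(k) (joins and meets computed in the relevant down-sets of X). -/

import Mathlib

open CategoryTheory Limits

universe u
universe u₁ v₁ u₂ v₂

attribute [local instance] CategoryTheory.ConcreteCategory.instFunLike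

namespace Desc

/-! ### Order-theoretic notions for preorders ("ordered sets") -/

/-- `x ≅ y`: equivalence in a preorder. -/
def EquivLE {X : Type u} [Preorder X] (x y : X) : Prop := x ≤ y ∧ y ≤ x

/-- `m` is a binary meet (greatest lower bound) of `y` and `z`. -/
def IsMeet {X : Type u} [Preorder X] (y z m : X) : Prop :=
  m ≤ y ∧ m ≤ z ∧ ∀ u, u ≤ y → u ≤ z → u ≤ m

/-- `j` is a join (least upper bound) of the subset `S` computed in the down-set `↓x`. -/
def IsLocalJoin {X : Type u} [Preorder X] (x : X) (S : Set X) (j : X) : Prop :=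
  j ≤ x ∧ (∀ s ∈ S, s ≤ j) ∧ ∀ u, u ≤ x → (∀ s ∈ S, s ≤ u) → j ≤ u

/-- `X` is locally complete: every subset of a down-set `↓x` has a join in `↓x`. -/
def LocallyComplete (X : Type u) [Preorder X] : Prop :=
  ∀ x : X, ∀ S : Set X, (∀ s ∈ S, s ≤ x) → ∃ j, IsLocalJoin x S j

/-- `X` is complete: every subset has a join (least upper bound). -/
def CompleteOrd (X : Type u) [Preorder X] : Prop :=
  ∀ S : Set X, ∃ j, IsLUB S j

/-- `X` locally has binary meets: each down-set `↓x` has binary meets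
(these are automatically meets in `X` of the pair). -/
def LocallyBinaryMeets (X : Type u) [Preorder X] : Prop :=
  ∀ x y z : X, y ≤ x → z ≤ x → ∃ m, IsMeet y z m

/-- `X` is locally cartesian closed: each down-set `↓x` has binary meets and
exponentials `z^y` satisfying `w ∧ y ≤ z ↔ w ≤ z^y`. -/
def LocallyCartesianClosed (X : Type u) [Preorder X] : Prop :=
  LocallyBinaryMeets X ∧
    ∀ x y z : X, y ≤ x → z ≤ x →
      ∃ e, e ≤ x ∧ ∀ w, w ≤ x → ((∃ m, IsMeet w y m ∧ m ≤ z) ↔ w ≤ e)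

theorem LocallyComplete.meets {X : Type u} [Preorder X] (h : LocallyComplete X) :
    LocallyBinaryMeets X := by
  intro x y z hy hz
  obtain ⟨j, hj⟩ := h x {u | u ≤ y ∧ u ≤ z} (fun s hs => hs.1.trans hy)
  exact ⟨j, hj.2.2 y hy (fun s hs => hs.1), hj.2.2 z hz (fun s hs => hs.2),
    fun u h1 h2 => hj.2.1 u ⟨h1, h2⟩⟩

theorem CompleteOrd.meets {X : Type u} [Preorder X] (h : CompleteOrd X) :
    LocallyBinaryMeets X := by
  intro _ y z _ _
  obtain ⟨j, hj⟩ := h {u | u ≤ y ∧ u ≤ z}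
  exact ⟨j, hj.2 (fun u hu => hu.1), hj.2 (fun u hu => hu.2),
    fun u h1 h2 => hj.1 ⟨h1, h2⟩⟩

/-! ### Descent-theoretic notions -/

/-- A morphism `f : A ⟶ B` in a category with pullbacks is an *effective descent morphism*
if the comparison functor from `𝒜/B` to the Eilenberg–Moore category of the monad induced on
`𝒜/A` by the adjunction `f_! ⊣ f*` is an equivalence, i.e. `f*` is monadic. -/
def IsEffectiveDescentMorphism {C : Type*} [Category C] [HasPullbacks C]
    {A B : C} (f : A ⟶ B) : Prop :=
  (Monad.comparison (Over.mapPullbackAdj f)).IsEquivalence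

/-- A morphism `f : A ⟶ B` in a category with pullbacks is a *descent morphism*
if the comparison functor from `𝒜/B` to the Eilenberg–Moore category of the monad induced on
`𝒜/A` by the adjunction `f_! ⊣ f*` is fully faithful. -/
def IsDescentMorphism {C : Type*} [Category C] [HasPullbacks C]
    {A B : C} (f : A ⟶ B) : Prop :=
  (Monad.comparison (Over.mapPullbackAdj f)).Full ∧
    (Monad.comparison (Over.mapPullbackAdj f)).Faithful

/-- A morphism `f : A ⟶ B` is a (pullback-)stable regular epimorphism if every pullback of it
(along any `g : Z ⟶ B`) is a regular epimorphism. -/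
def IsStableRegularEpi {C : Type*} [Category C] [HasPullbacks C]
    {A B : C} (f : A ⟶ B) : Prop :=
  ∀ ⦃Z : C⦄ (g : Z ⟶ B), Nonempty (RegularEpi (pullback.snd f g))



section PreordPullbacks

instance : HasPullbacks Preord.{u} := by
  have key : ∀ {A B C : Preord.{u}} (f : A ⟶ C) (g : B ⟶ C), HasLimit (cospan f g) := by
    intro A B C f g
    let P : Preord.{u} := Preord.of {p : A × B // f p.1 = g p.2}
    let fst : P ⟶ A := Preord.ofHom ⟨fun p => p.1.1, fun _ _ h => h.1⟩
    let snd : P ⟶ B := Preord.ofHom ⟨fun p => p.1.2, fun _ _ h => h.2⟩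
    have eq : fst ≫ f = snd ≫ g := Preord.ext (fun p => p.2)
    refine HasLimit.mk ⟨_, PullbackCone.IsLimit.mk eq
      (fun s => Preord.ofHom ⟨fun d => ⟨(s.fst d, s.snd d),
        congrFun (congrArg (fun (h : s.pt ⟶ C) => (h : s.pt → C)) s.condition) d⟩,
        fun _ _ h => ⟨s.fst.hom.monotone h, s.snd.hom.monotone h⟩⟩)
      (fun s => rfl) (fun s => rfl) (fun s m h1 h2 => ?_)⟩
    apply Preord.ext
    intro d
    apply Subtype.ext
    exact Prod.ext (congrFun (congrArg (fun (h : s.pt ⟶ A) => (h : s.pt → A)) h1) d)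
      (congrFun (congrArg (fun (h : s.pt ⟶ B) => (h : s.pt → B)) h2) d)
  exact @hasPullbacks_of_hasLimit_cospan _ _ (fun {A B C f g} => key f g)

instance : HasPullbacks PartOrd.{u} := by
  have key : ∀ {A B C : PartOrd.{u}} (f : A ⟶ C) (g : B ⟶ C), HasLimit (cospan f g) := by
    intro A B C f g
    let P : PartOrd.{u} := PartOrd.of {p : A × B // f p.1 = g p.2}
    let fst : P ⟶ A := PartOrd.ofHom ⟨fun p => p.1.1, fun _ _ h => h.1⟩
    let snd : P ⟶ B := PartOrd.ofHom ⟨fun p => p.1.2, fun _ _ h => h.2⟩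
    have eq : fst ≫ f = snd ≫ g := PartOrd.ext (fun p => p.2)
    refine HasLimit.mk ⟨_, PullbackCone.IsLimit.mk eq
      (fun s => PartOrd.ofHom ⟨fun d => ⟨(s.fst d, s.snd d),
        congrFun (congrArg (fun (h : s.pt ⟶ C) => (h : s.pt → C)) s.condition) d⟩,
        fun _ _ h => ⟨s.fst.hom.monotone h, s.snd.hom.monotone h⟩⟩)
      (fun s => rfl) (fun s => rfl) (fun s m h1 h2 => ?_)⟩
    apply PartOrd.ext
    intro d
    apply Subtype.ext
    exact Prod.ext (congrFun (congrArg (fun (h : s.pt ⟶ A) => (h : s.pt → A)) h1) d)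
      (congrFun (congrArg (fun (h : s.pt ⟶ B) => (h : s.pt → B)) h2) d)
  exact @hasPullbacks_of_hasLimit_cospan _ _ (fun {A B C f g} => key f g)

end PreordPullbacks



variable (X : Type u) [Preorder X]

/-! ### The lax comma category `Ord // X` -/

/-- Objects of the lax comma category `Ord // X`: an ordered set `A` together with a
monotone map `α : A → X`. -/
structure OrdComma : Type (u + 1) where
  carrier : Type u
  [str : Preorder carrier]
  map : carrier → X
  mono : Monotone map

attribute [instance] OrdComma.str

variable {X}

/-- Morphisms in `Ord // X`: monotone maps `f` with `α(a) ≤ β(f(a))`. -/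
@[ext]
structure OrdCommaHom (A B : OrdComma X) : Type u where
  toFun : A.carrier → B.carrier
  mono : Monotone toFun
  le : ∀ a, A.map a ≤ B.map (toFun a)

instance : Category (OrdComma X) where
  Hom := OrdCommaHom
  id A := ⟨id, monotone_id, fun _ => le_refl _⟩
  comp f g := ⟨OrdCommaHom.toFun g ∘ OrdCommaHom.toFun f,
    (OrdCommaHom.mono g).comp (OrdCommaHom.mono f),
    fun a => (OrdCommaHom.le f a).trans (OrdCommaHom.le g _)⟩
  id_comp _ := rfl
  comp_id _ := rfl
  assoc _ _ _ := rfl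

/-- The underlying function of a morphism in `Ord // X`. -/
def OrdComma.app {A B : OrdComma X} (f : A ⟶ B) : A.carrier → B.carrier :=
  OrdCommaHom.toFun f

/-! ### The category `Fam(X)` of set-indexed families of elements of `X` -/

variable (X) in
/-- Objects of `Fam(X)`: families `(α_j)_{j ∈ J}` of elements of `X`. -/
structure FamCat : Type (u + 1) where
  idx : Type u
  val : idx → X

/-- Morphisms in `Fam(X)`: functions `f : J → K` with `α_j ≤ β_{f(j)}`. -/
@[ext]
structure FamHom (A B : FamCat X) : Type u where
  toFun : A.idx → B.idx
  le : ∀ j, A.val j ≤ B.val (toFun j)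

instance : Category (FamCat X) where
  Hom := FamHom
  id A := ⟨id, fun _ => le_refl _⟩
  comp f g := ⟨FamHom.toFun g ∘ FamHom.toFun f,
    fun a => (FamHom.le f a).trans (FamHom.le g _)⟩
  id_comp _ := rfl
  comp_id _ := rfl
  assoc _ _ _ := rfl

/-- The underlying function of a morphism in `Fam(X)`. -/
def FamCat.app {A B : FamCat X} (f : A ⟶ B) : A.idx → B.idx :=
  FamHom.toFun f

/-! ### The category `Ord ×_Set Fam(X)` -/

variable (X) in
/-- Objects of `Ord ×_Set Fam(X)`: an ordered set `C` with an arbitrary function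
`χ : C → X`. -/
structure OrdFam : Type (u + 1) where
  carrier : Type u
  [str : Preorder carrier]
  map : carrier → X

attribute [instance] OrdFam.str

/-- Morphisms in `Ord ×_Set Fam(X)`: monotone maps `f` with `χ(c) ≤ ψ(f(c))`. -/
@[ext]
structure OrdFamHom (A B : OrdFam X) : Type u where
  toFun : A.carrier → B.carrier
  mono : Monotone toFun
  le : ∀ a, A.map a ≤ B.map (toFun a)

instance : Category (OrdFam X) where
  Hom := OrdFamHom
  id A := ⟨id, monotone_id, fun _ => le_refl _⟩
  comp f g := ⟨OrdFamHom.toFun g ∘ OrdFamHom.toFun f,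
    (OrdFamHom.mono g).comp (OrdFamHom.mono f),
    fun a => (OrdFamHom.le f a).trans (OrdFamHom.le g _)⟩
  id_comp _ := rfl
  comp_id _ := rfl
  assoc _ _ _ := rfl

/-! ### Functors between these categories -/

variable (X) in
/-- The forgetful functor `Ord // X ⥤ Ord`. -/
def ordCommaForget : OrdComma X ⥤ Preord.{u} where
  obj A := Preord.of A.carrier
  map f := Preord.ofHom ⟨OrdCommaHom.toFun f, OrdCommaHom.mono f⟩
  map_id _ := rfl
  map_comp _ _ := rfl

variable (X) in
/-- The forgetful functor `Ord // X ⥤ Fam(X)`, `(A, α) ↦ (α(a))_{a ∈ A}`. -/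
def ordCommaToFam : OrdComma X ⥤ FamCat X where
  obj A := ⟨A.carrier, A.map⟩
  map f := ⟨OrdCommaHom.toFun f, OrdCommaHom.le f⟩
  map_id _ := rfl
  map_comp _ _ := rfl

variable (X) in
/-- The projection `ρ₁ : Ord ×_Set Fam(X) ⥤ Ord`. -/
def rho₁ : OrdFam X ⥤ Preord.{u} where
  obj A := Preord.of A.carrier
  map f := Preord.ofHom ⟨OrdFamHom.toFun f, OrdFamHom.mono f⟩
  map_id _ := rfl
  map_comp _ _ := rfl

variable (X) in
/-- The projection `ρ₂ : Ord ×_Set Fam(X) ⥤ Fam(X)`. -/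
def rho₂ : OrdFam X ⥤ FamCat X where
  obj A := ⟨A.carrier, A.map⟩
  map f := ⟨OrdFamHom.toFun f, OrdFamHom.le f⟩
  map_id _ := rfl
  map_comp _ _ := rfl

/-! ### Restrictions `f_x : A_x → B_x` -/

/-- For `(A, α)` in `Ord // X` and `x ∈ X`, the ordered set `A_x = {a ∈ A : x ≤ α(a)}`. -/
def OrdComma.fiber (A : OrdComma X) (x : X) : Preord.{u} :=
  Preord.of {a : A.carrier // x ≤ A.map a}

/-- The restriction `f_x : A_x → B_x` of a morphism `f : (A, α) ⟶ (B, β)` of `Ord // X`. -/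
def OrdComma.fiberMap {A B : OrdComma X} (f : A ⟶ B) (x : X) :
    A.fiber x ⟶ B.fiber x :=
  Preord.ofHom ⟨fun a => ⟨OrdCommaHom.toFun f a.1, a.2.trans (OrdCommaHom.le f a.1)⟩,
    fun _ _ h => OrdCommaHom.mono f h⟩



variable {X : Type u} [Preorder X]

theorem OrdComma.hasPullbacks (hm : LocallyBinaryMeets X) :
    HasPullbacks (OrdComma X) := by
  have key : ∀ {A B C : OrdComma X} (f : A ⟶ C) (g : B ⟶ C), HasLimit (cospan f g) := by
    intro A B C f g
    have hmeet : ∀ p : {p : A.carrier × B.carrier //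
        OrdCommaHom.toFun f p.1 = OrdCommaHom.toFun g p.2},
        ∃ m, IsMeet (A.map p.1.1) (B.map p.1.2) m := fun p =>
      hm (C.map (OrdCommaHom.toFun f p.1.1)) _ _ (OrdCommaHom.le f p.1.1)
        (by rw [p.2]; exact OrdCommaHom.le g p.1.2)
    choose μ hμ using hmeet
    let P : OrdComma X :=
      { carrier := {p : A.carrier × B.carrier //
          OrdCommaHom.toFun f p.1 = OrdCommaHom.toFun g p.2}
        map := μ
        mono := fun p q h => by
          have hpq : p.1 ≤ q.1 := h
          exact (hμ q).2.2 _ ((hμ p).1.trans (A.mono (Prod.le_def.mp hpq).1))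
            ((hμ p).2.1.trans (B.mono (Prod.le_def.mp hpq).2)) }
    let pfst : P ⟶ A := ⟨fun p => p.1.1, fun _ _ h => h.1, fun p => (hμ p).1⟩
    let psnd : P ⟶ B := ⟨fun p => p.1.2, fun _ _ h => h.2, fun p => (hμ p).2.1⟩
    have eq : pfst ≫ f = psnd ≫ g := OrdCommaHom.ext (funext fun p => p.2)
    refine HasLimit.mk ⟨_, PullbackCone.IsLimit.mk eq
      (fun s => ⟨fun d => ⟨(OrdCommaHom.toFun s.fst d, OrdCommaHom.toFun s.snd d),
          congrFun (congrArg OrdCommaHom.toFun s.condition) d⟩,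
        fun _ _ h => ⟨OrdCommaHom.mono s.fst h, OrdCommaHom.mono s.snd h⟩,
        fun d => (hμ _).2.2 _ (OrdCommaHom.le s.fst d) (OrdCommaHom.le s.snd d)⟩)
      (fun s => rfl) (fun s => rfl) (fun s m h1 h2 => ?_)⟩
    apply OrdCommaHom.ext
    funext d
    exact Subtype.ext (Prod.ext (congrFun (congrArg OrdCommaHom.toFun h1) d)
      (congrFun (congrArg OrdCommaHom.toFun h2) d))
  exact @hasPullbacks_of_hasLimit_cospan _ _ (fun {A B C f g} => key f g)

theorem FamCat.hasPullbacks (hm : LocallyBinaryMeets X) :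
    HasPullbacks (FamCat X) := by
  have key : ∀ {A B C : FamCat X} (f : A ⟶ C) (g : B ⟶ C), HasLimit (cospan f g) := by
    intro A B C f g
    have hmeet : ∀ p : {p : A.idx × B.idx // FamHom.toFun f p.1 = FamHom.toFun g p.2},
        ∃ m, IsMeet (A.val p.1.1) (B.val p.1.2) m := fun p =>
      hm (C.val (FamHom.toFun f p.1.1)) _ _ (FamHom.le f p.1.1)
        (by rw [p.2]; exact FamHom.le g p.1.2)
    choose μ hμ using hmeet
    let P : FamCat X :=
      { idx := {p : A.idx × B.idx // FamHom.toFun f p.1 = FamHom.toFun g p.2}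
        val := μ }
    let pfst : P ⟶ A := ⟨fun p => p.1.1, fun p => (hμ p).1⟩
    let psnd : P ⟶ B := ⟨fun p => p.1.2, fun p => (hμ p).2.1⟩
    have eq : pfst ≫ f = psnd ≫ g := FamHom.ext (funext fun p => p.2)
    refine HasLimit.mk ⟨_, PullbackCone.IsLimit.mk eq
      (fun s => ⟨fun d => ⟨(FamHom.toFun s.fst d, FamHom.toFun s.snd d),
          congrFun (congrArg FamHom.toFun s.condition) d⟩,
        fun d => (hμ _).2.2 _ (FamHom.le s.fst d) (FamHom.le s.snd d)⟩)
      (fun s => rfl) (fun s => rfl) (fun s m h1 h2 => ?_)⟩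
    apply FamHom.ext
    funext d
    exact Subtype.ext (Prod.ext (congrFun (congrArg FamHom.toFun h1) d)
      (congrFun (congrArg FamHom.toFun h2) d))
  exact @hasPullbacks_of_hasLimit_cospan _ _ (fun {A B C f g} => key f g)

theorem OrdFam.hasPullbacks (hm : LocallyBinaryMeets X) :
    HasPullbacks (OrdFam X) := by
  have key : ∀ {A B C : OrdFam X} (f : A ⟶ C) (g : B ⟶ C), HasLimit (cospan f g) := by
    intro A B C f g
    have hmeet : ∀ p : {p : A.carrier × B.carrier //
        OrdFamHom.toFun f p.1 = OrdFamHom.toFun g p.2},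
        ∃ m, IsMeet (A.map p.1.1) (B.map p.1.2) m := fun p =>
      hm (C.map (OrdFamHom.toFun f p.1.1)) _ _ (OrdFamHom.le f p.1.1)
        (by rw [p.2]; exact OrdFamHom.le g p.1.2)
    choose μ hμ using hmeet
    let P : OrdFam X :=
      { carrier := {p : A.carrier × B.carrier //
          OrdFamHom.toFun f p.1 = OrdFamHom.toFun g p.2}
        map := μ }
    let pfst : P ⟶ A := ⟨fun p => p.1.1, fun _ _ h => h.1, fun p => (hμ p).1⟩
    let psnd : P ⟶ B := ⟨fun p => p.1.2, fun _ _ h => h.2, fun p => (hμ p).2.1⟩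
    have eq : pfst ≫ f = psnd ≫ g := OrdFamHom.ext (funext fun p => p.2)
    refine HasLimit.mk ⟨_, PullbackCone.IsLimit.mk eq
      (fun s => ⟨fun d => ⟨(OrdFamHom.toFun s.fst d, OrdFamHom.toFun s.snd d),
          congrFun (congrArg OrdFamHom.toFun s.condition) d⟩,
        fun _ _ h => ⟨OrdFamHom.mono s.fst h, OrdFamHom.mono s.snd h⟩,
        fun d => (hμ _).2.2 _ (OrdFamHom.le s.fst d) (OrdFamHom.le s.snd d)⟩)
      (fun s => rfl) (fun s => rfl) (fun s m h1 h2 => ?_)⟩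
    apply OrdFamHom.ext
    funext d
    exact Subtype.ext (Prod.ext (congrFun (congrArg OrdFamHom.toFun h1) d)
      (congrFun (congrArg OrdFamHom.toFun h2) d))
  exact @hasPullbacks_of_hasLimit_cospan _ _ (fun {A B C f g} => key f g)



variable (X : Type u) [Preorder X]

/-- The set of connected components of an ordered set `X`: the quotient of `X` by the
equivalence relation generated by `≤` (zigzags). -/
def ConnComp : Type u := Quot (fun a b : X => a ≤ b)

/-- The connected component of `X` corresponding to `i`, as an ordered set. -/
def Component (i : ConnComp X) : Type u :=
  {x : X // Quot.mk (fun a b : X => a ≤ b) x = i}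

instance (i : ConnComp X) : Preorder (Component X i) :=
  Subtype.preorder _

/-- The comparison functor `Ord // X ⥤ ∏_{i ∈ I} Ord // X_i`, where `(X_i)_{i ∈ I}` are the
connected components of `X`: it sends `(A, α)` to the family of (co)restrictions
`(A_i, α_i : A_i → X_i)` with `A_i = α⁻¹(X_i)`. -/
def componentFunctor : OrdComma X ⥤ (∀ i : ConnComp X, OrdComma (Component X i)) where
  obj A := fun i =>
    { carrier := {a : A.carrier // Quot.mk (fun a b : X => a ≤ b) (A.map a) = i}
      map := fun a => ⟨A.map a.1, a.2⟩
      mono := fun _ _ h => A.mono h }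
  map {A B} f := fun i =>
    { toFun := fun a => ⟨OrdCommaHom.toFun f a.1,
        (Quot.sound (OrdCommaHom.le f a.1)).symm.trans a.2⟩
      mono := fun _ _ h => OrdCommaHom.mono f h
      le := fun a => OrdCommaHom.le f a.1 }
  map_id A := by
    funext i
    apply OrdCommaHom.ext
    funext a
    rfl
  map_comp f g := by
    funext i
    apply OrdCommaHom.ext
    funext a
    rfl




/-! An algebra for the monad `f^* f_!` on `Fam(X)/A` is a family `u : (γ_c) ⟶ (α_j)` with an
action `(c, i) ↦ c • i` of the indices `i` in the fibre of `f (u c)`, subject to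
`γ_c ∧ α_i ≤ γ_{c • i}`. A compatible subfamily `σ ≤ α` is such an algebra, acting by
`j • i = i`. If it is the pullback of a family `δ` over `B`, the whole fibre of `f j` lies over a
single `δ_d`, which therefore bounds `⋁ σ_i`, and `α_j ∧ ⋁ σ_i ≤ α_j ∧ δ_d ≤ σ_j`. Conversely an
algebra descends to the family over `B` indexed by its orbits, each valued in the join of its
values in `↓β_k`; the condition, applied to the subfamily `i ↦ γ_{c • i}`, says that pulling this
family back along `f` returns the algebra. So the condition is exactly essential surjectivity of
the comparison functor. -/

section FamHom

variable {X : Type u} [Preorder X]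

instance {A B : FamCat X} : CoeFun (A ⟶ B) (fun _ => A.idx → B.idx) := ⟨FamHom.toFun⟩

attribute [coe] FamHom.toFun

theorem FamHom.congr_apply {A B : FamCat X} {g h : A ⟶ B} (e : g = h) (x : A.idx) :
    g x = h x :=
  congrFun (congrArg FamHom.toFun e) x

@[simp]
theorem FamHom.comp_apply {A B C : FamCat X} (g : A ⟶ B) (h : B ⟶ C) (x : A.idx) :
    (g ≫ h) x = h (g x) :=
  rfl

@[simp]
theorem FamHom.id_apply (A : FamCat X) (x : A.idx) : (𝟙 A : A ⟶ A) x = x :=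
  rfl

theorem LocallyBinaryMeets.exists_isMeet_of_map_eq (hm : LocallyBinaryMeets X)
    {D A Z : FamCat X} {p : D ⟶ Z} {q : A ⟶ Z} {a : D.idx} {b : A.idx} (h : p a = q b) :
    ∃ m, IsMeet (D.val a) (A.val b) m :=
  hm _ _ _ (FamHom.le p a) ((FamHom.le q b).trans_eq (congrArg Z.val h.symm))

end FamHom

section Compatible

variable {X : Type u} [Preorder X] {A B : FamCat X}

def FamCat.IsCompatible (f : A ⟶ B) (σ : A.idx → X) : Prop :=
  ∀ i j, f i = f j → ∀ m m', IsMeet (σ j) (A.val i) m → IsMeet (A.val j) (σ i) m' → EquivLE m m'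

/-- The condition of the theorem: every compatible subfamily `σ ≤ α` is recovered from its
fibrewise joins as `σ_j ≅ α_j ∧ ⋁_{f i = f j} σ_i`. -/
def FamCat.RecoversCompatibleFamilies (f : A ⟶ B) : Prop :=
  ∀ σ : A.idx → X, (∀ j, σ j ≤ A.val j) → FamCat.IsCompatible f σ →
    ∀ j s, IsLocalJoin (B.val (f j)) {x | ∃ i, f i = f j ∧ x = σ i} s →
      ∀ m, IsMeet (A.val j) s m → EquivLE m (σ j)

theorem FamCat.isCompatible_iff (hm : LocallyBinaryMeets X) {f : A ⟶ B} {σ : A.idx → X}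
    (hσ : ∀ j, σ j ≤ A.val j) :
    FamCat.IsCompatible f σ ↔ ∀ i j, f i = f j → ∀ w, w ≤ σ j → w ≤ A.val i → w ≤ σ i := by
  have hσB : ∀ {i j}, f i = f j → σ j ≤ B.val (f i) := fun hij =>
    (hσ _).trans ((FamHom.le f _).trans_eq (congrArg B.val hij.symm))
  constructor
  · intro hc i j hij w hwj hwi
    obtain ⟨m, hm₁⟩ := hm _ _ _ (hσB hij) (FamHom.le f i)
    obtain ⟨m', hm₂⟩ := hm _ _ _ (FamHom.le f j) (hσB hij.symm)
    exact (hm₁.2.2 w hwj hwi).trans ((hc i j hij m m' hm₁ hm₂).1.trans hm₂.2.1)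
  · intro h i j hij m m' hm₁ hm₂
    exact ⟨hm₂.2.2 m (hm₁.1.trans (hσ j)) (h i j hij m hm₁.1 hm₁.2.1),
      hm₁.2.2 m' (h j i hij.symm m' hm₂.2.1 hm₂.1) (hm₂.2.1.trans (hσ i))⟩

end Compatible

section Pullback

variable {X : Type u} [Preorder X] [HasPullbacks (FamCat X)] {D A Z W : FamCat X}
  {p : D ⟶ Z} {q : A ⟶ Z}

def FamCat.point (x : X) : FamCat X := ⟨PUnit, fun _ => x⟩

def FamCat.pointHom {P : FamCat X} (z : P.idx) {x : X} (hx : x ≤ P.val z) :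
    FamCat.point x ⟶ P :=
  ⟨fun _ => z, fun _ => hx⟩

@[simp]
theorem FamCat.fst_lift_apply (g : W ⟶ D) (h : W ⟶ A) (hw : g ≫ p = h ≫ q) (x : W.idx) :
    pullback.fst p q (pullback.lift g h hw x) = g x :=
  FamHom.congr_apply (pullback.lift_fst g h hw) x

@[simp]
theorem FamCat.snd_lift_apply (g : W ⟶ D) (h : W ⟶ A) (hw : g ≫ p = h ≫ q) (x : W.idx) :
    pullback.snd p q (pullback.lift g h hw x) = h x :=
  FamHom.congr_apply (pullback.lift_snd g h hw) x

theorem FamCat.pullback_condition_apply (z : (pullback p q).idx) :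
    p (pullback.fst p q z) = q (pullback.snd p q z) :=
  FamHom.congr_apply pullback.condition z

theorem FamCat.pullback_idx_eq_of_le {z z' : (pullback p q).idx}
    (h₁ : pullback.fst p q z = pullback.fst p q z') (h₂ : pullback.snd p q z = pullback.snd p q z')
    (hle : (pullback p q).val z ≤ (pullback p q).val z') : z = z' :=
  FamHom.congr_apply (g := FamCat.pointHom z le_rfl) (h := FamCat.pointHom z' hle)
    (pullback.hom_ext (FamHom.ext (funext fun _ => h₁)) (FamHom.ext (funext fun _ => h₂)))
    PUnit.unit

noncomputable def FamCat.pullbackMk (hm : LocallyBinaryMeets X) (a : D.idx) (b : A.idx)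
    (h : p a = q b) : (pullback p q).idx :=
  pullback.lift (FamCat.pointHom a (hm.exists_isMeet_of_map_eq h).choose_spec.1)
    (FamCat.pointHom b (hm.exists_isMeet_of_map_eq h).choose_spec.2.1)
    (FamHom.ext (funext fun _ => h)) PUnit.unit

variable {hm : LocallyBinaryMeets X}

@[simp]
theorem FamCat.fst_pullbackMk {a : D.idx} {b : A.idx} {h : p a = q b} :
    pullback.fst p q (FamCat.pullbackMk hm a b h) = a :=
  FamHom.congr_apply (pullback.lift_fst (FamCat.pointHom a _) (FamCat.pointHom b _)
    (FamHom.ext (funext fun _ => h))) PUnit.unit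

@[simp]
theorem FamCat.snd_pullbackMk {a : D.idx} {b : A.idx} {h : p a = q b} :
    pullback.snd p q (FamCat.pullbackMk hm a b h) = b :=
  FamHom.congr_apply (pullback.lift_snd (FamCat.pointHom a _) (FamCat.pointHom b _)
    (FamHom.ext (funext fun _ => h))) PUnit.unit

theorem FamCat.le_val_pullbackMk {a : D.idx} {b : A.idx} (h : p a = q b) {w : X}
    (hwa : w ≤ D.val a) (hwb : w ≤ A.val b) :
    w ≤ (pullback p q).val (FamCat.pullbackMk hm a b h) :=
  ((hm.exists_isMeet_of_map_eq h).choose_spec.2.2 w hwa hwb).trans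
    (FamHom.le (pullback.lift (FamCat.pointHom a _) (FamCat.pointHom b _)
      (FamHom.ext (funext fun _ => h))) PUnit.unit)

theorem FamCat.eq_pullbackMk (z : (pullback p q).idx) :
    z = FamCat.pullbackMk hm _ _ (FamCat.pullback_condition_apply z) :=
  FamCat.pullback_idx_eq_of_le (by simp) (by simp)
    (FamCat.le_val_pullbackMk _ (FamHom.le _ z) (FamHom.le _ z))

-- Without meets the chosen pullback could contain distinct elements with the same components
-- and incomparable values.
theorem FamCat.pullback_idx_ext (hm : LocallyBinaryMeets X) {z z' : (pullback p q).idx}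
    (h₁ : pullback.fst p q z = pullback.fst p q z')
    (h₂ : pullback.snd p q z = pullback.snd p q z') : z = z' := by
  rw [FamCat.eq_pullbackMk (hm := hm) z, FamCat.eq_pullbackMk (hm := hm) z']
  congr 1

theorem FamCat.isMeet_val_pullback (hm : LocallyBinaryMeets X) (z : (pullback p q).idx) :
    IsMeet (D.val (pullback.fst p q z)) (A.val (pullback.snd p q z)) ((pullback p q).val z) :=
  ⟨FamHom.le _ z, FamHom.le _ z, fun _ hwa hwb =>
    (FamCat.le_val_pullbackMk _ hwa hwb).trans_eq
      (congrArg _ (FamCat.eq_pullbackMk (hm := hm) z).symm)⟩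

variable {B : FamCat X} (f : A ⟶ B)

theorem FamCat.fst_pullback_map_left {Y₁ Y₂ : Over B} (g : Y₁ ⟶ Y₂)
    (z : (pullback Y₁.hom f).idx) :
    pullback.fst Y₂.hom f (((Over.pullback f).map g).left z) = g.left (pullback.fst Y₁.hom f z) :=
  FamCat.fst_lift_apply _ _ _ z

theorem FamCat.snd_pullback_map_left {Y₁ Y₂ : Over B} (g : Y₁ ⟶ Y₂)
    (z : (pullback Y₁.hom f).idx) :
    pullback.snd Y₂.hom f (((Over.pullback f).map g).left z) = pullback.snd Y₁.hom f z :=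
  FamCat.snd_lift_apply _ _ _ z

end Pullback

section AlgebraAction

variable {X : Type u} [Preorder X] [HasPullbacks (FamCat X)] {A B : FamCat X} {f : A ⟶ B}
  (hm : LocallyBinaryMeets X) (M : (Over.mapPullbackAdj f).toMonad.Algebra)

noncomputable def FamCat.algebraAct (c : M.A.left.idx) (i : A.idx) (h : f (M.A.hom c) = f i) :
    M.A.left.idx :=
  M.a.left (FamCat.pullbackMk hm (p := M.A.hom ≫ f) c i h)

variable {M}

theorem FamCat.algebra_a_left_apply (z : (pullback (M.A.hom ≫ f) f).idx) :
    M.a.left z = FamCat.algebraAct hm M _ _ (FamCat.pullback_condition_apply z) :=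
  congrArg M.a.left (FamCat.eq_pullbackMk z)

@[simp]
theorem FamCat.hom_algebraAct {c : M.A.left.idx} {i : A.idx} (h : f (M.A.hom c) = f i) :
    M.A.hom (FamCat.algebraAct hm M c i h) = i :=
  (FamHom.congr_apply (Over.w M.a) _).trans FamCat.snd_pullbackMk

theorem FamCat.algebraAct_self (c : M.A.left.idx) :
    FamCat.algebraAct hm M c (M.A.hom c) rfl = c := by
  have hunit := FamHom.congr_apply (congrArg CommaMorphism.left M.unit) c
  refine (congrArg M.a.left (FamCat.pullback_idx_ext hm ?_ ?_)).trans hunit <;> simp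

variable {hm} in
theorem FamCat.algebraAct_congr {c c' : M.A.left.idx} {i i' : A.idx} (hc : c = c')
    (hi : i = i') (h : f (M.A.hom c) = f i) (h' : f (M.A.hom c') = f i') :
    FamCat.algebraAct hm M c i h = FamCat.algebraAct hm M c' i' h' := by
  subst hc hi
  rfl

theorem FamCat.algebraAct_algebraAct {c : M.A.left.idx} {i j : A.idx}
    (hi : f (M.A.hom c) = f i) (hj : f (M.A.hom c) = f j) :
    FamCat.algebraAct hm M (FamCat.algebraAct hm M c i hi) j (by simpa [← hi] using hj) =
      FamCat.algebraAct hm M c j hj := by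
  let w : (pullback ((Over.map f).obj ((Over.pullback f).obj ((Over.map f).obj M.A))).hom f).idx :=
    FamCat.pullbackMk hm (FamCat.pullbackMk hm c i hi) j (by simpa [← hi] using hj)
  let μw := ((Over.pullback f).map
    ((Over.mapPullbackAdj f).counit.app ((Over.map f).obj M.A))).left w
  let aw := ((Over.pullback f).map ((Over.map f).map M.a)).left w
  have hassoc : M.a.left μw = M.a.left aw :=
    FamHom.congr_apply (congrArg CommaMorphism.left M.assoc) w
  have hμ₁ : pullback.fst _ f μw = c :=
    (FamCat.fst_pullback_map_left f _ w).trans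
      ((congrArg (pullback.fst _ f) FamCat.fst_pullbackMk).trans FamCat.fst_pullbackMk)
  have hμ₂ : pullback.snd _ f μw = j :=
    (FamCat.snd_pullback_map_left f _ w).trans FamCat.snd_pullbackMk
  have ha₁ : pullback.fst _ f aw = FamCat.algebraAct hm M c i hi :=
    (FamCat.fst_pullback_map_left f _ w).trans (congrArg M.a.left FamCat.fst_pullbackMk)
  have ha₂ : pullback.snd _ f aw = j :=
    (FamCat.snd_pullback_map_left f _ w).trans FamCat.snd_pullbackMk
  calc _ = M.a.left aw :=
        (FamCat.algebraAct_congr ha₁.symm ha₂.symm _ _).trans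
          (FamCat.algebra_a_left_apply hm _).symm
    _ = M.a.left μw := hassoc.symm
    _ = _ := (FamCat.algebra_a_left_apply hm _).trans (FamCat.algebraAct_congr hμ₁ hμ₂ _ _)

theorem FamCat.le_val_algebraAct {c : M.A.left.idx} {i : A.idx} (h : f (M.A.hom c) = f i)
    {w : X} (hwc : w ≤ M.A.left.val c) (hwi : w ≤ A.val i) :
    w ≤ M.A.left.val (FamCat.algebraAct hm M c i h) :=
  (FamCat.le_val_pullbackMk (p := M.A.hom ≫ f) h hwc hwi).trans (FamHom.le M.a.left _)

theorem FamCat.val_algebraAct_le {c : M.A.left.idx} {i : A.idx} (h : f (M.A.hom c) = f i) :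
    M.A.left.val (FamCat.algebraAct hm M c i h) ≤ A.val i :=
  (FamHom.le M.A.hom _).trans_eq (congrArg A.val (FamCat.hom_algebraAct hm h))

end AlgebraAction

section SubfamilyAlgebra

variable {X : Type u} [Preorder X] [HasPullbacks (FamCat X)] {A B : FamCat X} {f : A ⟶ B}
  {σ : A.idx → X}

def FamCat.subfamily (σ : A.idx → X) (hσ : ∀ j, σ j ≤ A.val j) : Over A :=
  Over.mk (Y := ⟨A.idx, σ⟩) ⟨id, hσ⟩

noncomputable def FamCat.subfamilyAlgebra (hm : LocallyBinaryMeets X) (hσ : ∀ j, σ j ≤ A.val j)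
    (hc : FamCat.IsCompatible f σ) : (Over.mapPullbackAdj f).toMonad.Algebra where
  A := FamCat.subfamily σ hσ
  a := Over.homMk
    ⟨fun z => pullback.snd _ f z, fun z =>
      (FamCat.isCompatible_iff hm hσ).mp hc _ _ (FamCat.pullback_condition_apply z).symm _
        (FamCat.isMeet_val_pullback hm z).1 (FamCat.isMeet_val_pullback hm z).2.1⟩
    rfl
  unit := Over.OverMorphism.ext (FamHom.ext (funext fun c =>
    FamCat.snd_lift_apply (𝟙 _) (FamCat.subfamily σ hσ).hom _ c))
  assoc := Over.OverMorphism.ext (FamHom.ext (funext fun w =>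
    (FamCat.snd_pullback_map_left f _ w).trans (FamCat.snd_pullback_map_left f _ w).symm))

theorem FamCat.equivLE_of_pullback_iso (hm : LocallyBinaryMeets X) (hσ : ∀ j, σ j ≤ A.val j)
    {D : Over B} (e : (Over.pullback f).obj D ≅ FamCat.subfamily σ hσ) {j : A.idx} {s : X}
    (hs : IsLocalJoin (B.val (f j)) {x | ∃ i, f i = f j ∧ x = σ i} s) {m : X}
    (hmj : IsMeet (A.val j) s m) : EquivLE m (σ j) := by
  have hsnd_inv : ∀ i, pullback.snd D.hom f (e.inv.left i) = i :=
    FamHom.congr_apply (Over.w e.inv)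
  have hhom : ∀ z, e.hom.left z = pullback.snd D.hom f z := FamHom.congr_apply (Over.w e.hom)
  have hinv_hom : ∀ z, e.inv.left (e.hom.left z) = z :=
    FamHom.congr_apply (congrArg CommaMorphism.left e.hom_inv_id)
  have hhom_inv : ∀ i, e.hom.left (e.inv.left i) = i :=
    FamHom.congr_apply (congrArg CommaMorphism.left e.inv_hom_id)
  set d := pullback.fst D.hom f (e.inv.left j)
  have hdj : D.hom d = f j :=
    (FamCat.pullback_condition_apply _).trans (congrArg f (hsnd_inv j))
  have hfst_inv : ∀ i, f i = f j → pullback.fst D.hom f (e.inv.left i) = d := by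
    intro i hi
    let z := FamCat.pullbackMk hm d i (hdj.trans hi.symm)
    have hz : e.inv.left i = z :=
      (congrArg e.inv.left ((hhom z).trans FamCat.snd_pullbackMk)).symm.trans (hinv_hom z)
    rw [hz]
    exact FamCat.fst_pullbackMk
  have hs_le : s ≤ D.left.val d := by
    refine hs.2.2 _ ((FamHom.le D.hom d).trans_eq (congrArg B.val hdj)) ?_
    rintro _ ⟨i, hi, rfl⟩
    calc σ i ≤ _ := FamHom.le e.inv.left i
      _ ≤ _ := (FamCat.isMeet_val_pullback hm _).1
      _ = D.left.val d := congrArg D.left.val (hfst_inv i hi)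
  refine ⟨?_, hmj.2.2 (σ j) (hσ j) (hs.2.1 _ ⟨j, rfl, rfl⟩)⟩
  calc m ≤ _ := (FamCat.isMeet_val_pullback hm (e.inv.left j)).2.2 m (hmj.2.1.trans hs_le)
        (hmj.1.trans_eq (congrArg A.val (hsnd_inv j)).symm)
    _ ≤ σ (e.hom.left (e.inv.left j)) := FamHom.le e.hom.left _
    _ = σ j := congrArg σ (hhom_inv j)

end SubfamilyAlgebra

section Orbits

variable {X : Type u} [Preorder X] [HasPullbacks (FamCat X)] {A B : FamCat X} {f : A ⟶ B}
  (hm : LocallyBinaryMeets X) (M : (Over.mapPullbackAdj f).toMonad.Algebra)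

def FamCat.orbitSetoid : Setoid M.A.left.idx where
  r c c' := ∃ i h, FamCat.algebraAct hm M c i h = c'
  iseqv :=
    { refl := fun c => ⟨_, rfl, FamCat.algebraAct_self hm c⟩
      symm := by
        rintro c _ ⟨i, h, rfl⟩
        exact ⟨M.A.hom c, by simp [h],
          (FamCat.algebraAct_algebraAct hm h rfl).trans (FamCat.algebraAct_self hm c)⟩
      trans := by
        rintro c _ _ ⟨i, h, rfl⟩ ⟨j, h', rfl⟩
        exact ⟨j, h.trans (by simpa using h'), (FamCat.algebraAct_algebraAct hm h _).symm⟩ }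

variable {hm M}

theorem FamCat.map_hom_eq_of_orbit {c c' : M.A.left.idx} (hc : FamCat.orbitSetoid hm M c c') :
    f (M.A.hom c) = f (M.A.hom c') := by
  obtain ⟨i, h, rfl⟩ := hc
  simpa using h

theorem FamCat.algebraAct_hom_of_orbit {c c' : M.A.left.idx}
    (hc : FamCat.orbitSetoid hm M c c') :
    FamCat.algebraAct hm M c (M.A.hom c') (FamCat.map_hom_eq_of_orbit hc) = c' := by
  obtain ⟨i, h, rfl⟩ := hc
  exact FamCat.algebraAct_congr rfl (by simp) _ _

theorem FamCat.mk_algebraAct {c : M.A.left.idx} {i : A.idx} (h : f (M.A.hom c) = f i) :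
    (⟦FamCat.algebraAct hm M c i h⟧ : Quotient (FamCat.orbitSetoid hm M)) = ⟦c⟧ :=
  (Quotient.sound (show FamCat.orbitSetoid hm M c _ from ⟨i, h, rfl⟩)).symm

variable (hm M)

noncomputable def FamCat.orbitMap : Quotient (FamCat.orbitSetoid hm M) → B.idx :=
  Quotient.lift (fun c => f (M.A.hom c)) fun _ _ => FamCat.map_hom_eq_of_orbit

def FamCat.orbitValues (q : Quotient (FamCat.orbitSetoid hm M)) : Set X :=
  {x | ∃ c, ⟦c⟧ = q ∧ x = M.A.left.val c}

theorem FamCat.exists_isLocalJoin_orbitValues (hX : LocallyComplete X)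
    (q : Quotient (FamCat.orbitSetoid hX.meets M)) :
    ∃ s, IsLocalJoin (B.val (FamCat.orbitMap hX.meets M q)) (FamCat.orbitValues hX.meets M q) s :=
  hX _ _ (by
    rintro _ ⟨c, rfl, rfl⟩
    exact (FamHom.le M.A.hom c).trans (FamHom.le f _))

noncomputable def FamCat.descend (hX : LocallyComplete X) : Over B :=
  Over.mk (Y := ⟨Quotient (FamCat.orbitSetoid hX.meets M),
      fun q => (FamCat.exists_isLocalJoin_orbitValues M hX q).choose⟩)
    ⟨FamCat.orbitMap hX.meets M,
      fun q => (FamCat.exists_isLocalJoin_orbitValues M hX q).choose_spec.1⟩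

variable {M}

theorem FamCat.isLocalJoin_descend (hX : LocallyComplete X)
    (q : Quotient (FamCat.orbitSetoid hX.meets M)) :
    IsLocalJoin (B.val (FamCat.orbitMap hX.meets M q)) (FamCat.orbitValues hX.meets M q)
      ((FamCat.descend M hX).left.val q) :=
  (FamCat.exists_isLocalJoin_orbitValues M hX q).choose_spec

end Orbits

section Descend

variable {X : Type u} [Preorder X] [HasPullbacks (FamCat X)] {A B : FamCat X} {f : A ⟶ B}
  {M : (Over.mapPullbackAdj f).toMonad.Algebra} (hX : LocallyComplete X)

theorem FamCat.orbitMap_out_eq {q : Quotient (FamCat.orbitSetoid hX.meets M)} {j : A.idx}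
    (hj : FamCat.orbitMap hX.meets M q = f j) : f (M.A.hom q.out) = f j :=
  (congrArg (FamCat.orbitMap hX.meets M) (Quotient.out_eq q)).trans hj

open Classical in
noncomputable def FamCat.actFamily (c : M.A.left.idx) (i : A.idx) : X :=
  if h : f (M.A.hom c) = f i then M.A.left.val (FamCat.algebraAct hX.meets M c i h) else A.val i

theorem FamCat.actFamily_of_eq {c : M.A.left.idx} {i : A.idx} (h : f (M.A.hom c) = f i) :
    FamCat.actFamily hX c i = M.A.left.val (FamCat.algebraAct hX.meets M c i h) :=
  dif_pos h

theorem FamCat.actFamily_of_ne {c : M.A.left.idx} {i : A.idx} (h : f (M.A.hom c) ≠ f i) :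
    FamCat.actFamily hX c i = A.val i :=
  dif_neg h

theorem FamCat.actFamily_le (c : M.A.left.idx) (i : A.idx) : FamCat.actFamily hX c i ≤ A.val i := by
  by_cases h : f (M.A.hom c) = f i
  · exact (FamCat.actFamily_of_eq hX h).trans_le (FamCat.val_algebraAct_le hX.meets h)
  · exact (FamCat.actFamily_of_ne hX h).le

theorem FamCat.isCompatible_actFamily (c : M.A.left.idx) :
    FamCat.IsCompatible f (FamCat.actFamily hX c) := by
  refine (FamCat.isCompatible_iff hX.meets (FamCat.actFamily_le hX c)).mpr
    fun i i' hii' w hwi' hwi => ?_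
  by_cases h : f (M.A.hom c) = f i
  · rw [FamCat.actFamily_of_eq hX (h.trans hii')] at hwi'
    rw [FamCat.actFamily_of_eq hX h, ← FamCat.algebraAct_algebraAct hX.meets (h.trans hii') h]
    exact FamCat.le_val_algebraAct hX.meets _ hwi' hwi
  · exact hwi.trans_eq (FamCat.actFamily_of_ne hX h).symm

theorem FamCat.orbitValues_eq_actFamily {q : Quotient (FamCat.orbitSetoid hX.meets M)}
    {j : A.idx} (hj : FamCat.orbitMap hX.meets M q = f j) :
    FamCat.orbitValues hX.meets M q = {x | ∃ i, f i = f j ∧ x = FamCat.actFamily hX q.out i} := by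
  have hq := FamCat.orbitMap_out_eq hX hj
  ext x
  constructor
  · rintro ⟨c, rfl, rfl⟩
    have hc := Quotient.exact (s := FamCat.orbitSetoid hX.meets M) (Quotient.out_eq ⟦c⟧)
    refine ⟨M.A.hom c, hj, ?_⟩
    rw [FamCat.actFamily_of_eq hX (FamCat.map_hom_eq_of_orbit hc),
      FamCat.algebraAct_hom_of_orbit hc]
  · rintro ⟨i, hi, rfl⟩
    exact ⟨_, (FamCat.mk_algebraAct (hq.trans hi.symm)).trans (Quotient.out_eq q),
      FamCat.actFamily_of_eq hX _⟩

theorem FamCat.le_val_algebraAct_out (hrec : FamCat.RecoversCompatibleFamilies f)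
    {q : Quotient (FamCat.orbitSetoid hX.meets M)} {j : A.idx}
    (hj : FamCat.orbitMap hX.meets M q = f j) {w : X}
    (hwq : w ≤ (FamCat.descend M hX).left.val q) (hwj : w ≤ A.val j) :
    w ≤ M.A.left.val (FamCat.algebraAct hX.meets M q.out j (FamCat.orbitMap_out_eq hX hj)) := by
  have hjoin : IsLocalJoin (B.val (f j)) {x | ∃ i, f i = f j ∧ x = FamCat.actFamily hX q.out i}
      ((FamCat.descend M hX).left.val q) := by
    rw [← FamCat.orbitValues_eq_actFamily hX hj, ← hj]
    exact FamCat.isLocalJoin_descend hX q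
  obtain ⟨m, hm⟩ := hX.meets _ _ _ (FamHom.le f j) hjoin.1
  have hrec_j := (hrec _ (FamCat.actFamily_le hX q.out) (FamCat.isCompatible_actFamily hX q.out)
    j _ hjoin m hm).1
  rw [FamCat.actFamily_of_eq hX (FamCat.orbitMap_out_eq hX hj)] at hrec_j
  exact (hm.2.2 w hwj hwq).trans hrec_j

variable (M) (hrec : FamCat.RecoversCompatibleFamilies f)

noncomputable def FamCat.pullbackDescendHom :
    (Over.pullback f).obj (FamCat.descend M hX) ⟶ M.A :=
  Over.homMk
    ⟨fun z => FamCat.algebraAct hX.meets M (pullback.fst _ f z).out (pullback.snd _ f z)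
        (FamCat.orbitMap_out_eq hX (FamCat.pullback_condition_apply z)),
      fun z => FamCat.le_val_algebraAct_out hX hrec (FamCat.pullback_condition_apply z)
        (FamCat.isMeet_val_pullback hX.meets z).1 (FamCat.isMeet_val_pullback hX.meets z).2.1⟩
    (FamHom.ext (funext fun _ => FamCat.hom_algebraAct _ _))

noncomputable def FamCat.pullbackDescendInvLeft :
    M.A.left ⟶ pullback (FamCat.descend M hX).hom f :=
  ⟨fun c => FamCat.pullbackMk hX.meets (p := (FamCat.descend M hX).hom) ⟦c⟧ (M.A.hom c) rfl,
    fun c => FamCat.le_val_pullbackMk _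
      ((FamCat.isLocalJoin_descend hX ⟦c⟧).2.1 _ ⟨c, rfl, rfl⟩) (FamHom.le M.A.hom c)⟩

theorem FamCat.fst_pullbackDescendInvLeft (c : M.A.left.idx) :
    pullback.fst _ f (FamCat.pullbackDescendInvLeft M hX c) = ⟦c⟧ :=
  FamCat.fst_pullbackMk (hm := hX.meets) (p := (FamCat.descend M hX).hom) (q := f)
    (b := M.A.hom c) (h := rfl)

theorem FamCat.snd_pullbackDescendInvLeft (c : M.A.left.idx) :
    pullback.snd _ f (FamCat.pullbackDescendInvLeft M hX c) = M.A.hom c :=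
  FamCat.snd_pullbackMk (hm := hX.meets) (p := (FamCat.descend M hX).hom) (q := f)
    (a := ⟦c⟧) (h := rfl)

noncomputable def FamCat.pullbackDescendInv :
    M.A ⟶ (Over.pullback f).obj (FamCat.descend M hX) :=
  Over.homMk (FamCat.pullbackDescendInvLeft M hX)
    (FamHom.ext (funext (FamCat.snd_pullbackDescendInvLeft M hX)))

noncomputable def FamCat.pullbackDescendIso :
    (Over.pullback f).obj (FamCat.descend M hX) ≅ M.A where
  hom := FamCat.pullbackDescendHom M hX hrec
  inv := FamCat.pullbackDescendInv M hX
  hom_inv_id := Over.OverMorphism.ext (FamHom.ext (funext fun z => by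
    refine FamCat.pullback_idx_ext hX.meets ?_ ?_
    · exact (FamCat.fst_pullbackDescendInvLeft M hX _).trans
        ((FamCat.mk_algebraAct _).trans (Quotient.out_eq _))
    · exact (FamCat.snd_pullbackDescendInvLeft M hX _).trans (FamCat.hom_algebraAct _ _)))
  inv_hom_id := Over.OverMorphism.ext (FamHom.ext (funext fun c =>
    (FamCat.algebraAct_congr (congrArg Quotient.out (FamCat.fst_pullbackDescendInvLeft M hX c))
      (FamCat.snd_pullbackDescendInvLeft M hX c) _ _).trans
    (FamCat.algebraAct_hom_of_orbit
      (Quotient.exact (s := FamCat.orbitSetoid hX.meets M) (Quotient.out_eq ⟦c⟧)))))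

noncomputable def FamCat.comparisonDescendIso :
    (Monad.comparison (Over.mapPullbackAdj f)).obj (FamCat.descend M hX) ≅ M :=
  Monad.Algebra.isoMk (FamCat.pullbackDescendIso M hX hrec) (by
    refine Over.OverMorphism.ext (FamHom.ext (funext fun x => ?_))
    let hom := FamCat.pullbackDescendHom M hX hrec
    let y := ((Over.pullback f).map ((Over.map f).map hom)).left x
    let y' := ((Over.pullback f).map
      ((Over.mapPullbackAdj f).counit.app (FamCat.descend M hX))).left x
    have hy₁ : pullback.fst _ f y = hom.left (pullback.fst _ f x) :=
      FamCat.fst_pullback_map_left f _ x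
    have hy₂ : pullback.snd _ f y = pullback.snd _ f x :=
      FamCat.snd_pullback_map_left f _ x
    have hy'₁ : pullback.fst _ f y' = pullback.fst _ f (pullback.fst _ f x) :=
      FamCat.fst_pullback_map_left f _ x
    have hy'₂ : pullback.snd _ f y' = pullback.snd _ f x :=
      FamCat.snd_pullback_map_left f _ x
    have h₁ := FamCat.orbitMap_out_eq hX (FamCat.pullback_condition_apply (pullback.fst _ f x))
    have h₂ : f (M.A.hom (pullback.fst _ f (pullback.fst _ f x)).out) = f (pullback.snd _ f x) :=
      h₁.trans (FamCat.pullback_condition_apply x)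
    change M.a.left y = hom.left y'
    rw [FamCat.algebra_a_left_apply hX.meets]
    calc _ = FamCat.algebraAct hX.meets M (hom.left (pullback.fst _ f x)) (pullback.snd _ f x) _ :=
          FamCat.algebraAct_congr hy₁ hy₂ _
            ((congrArg f (FamCat.hom_algebraAct hX.meets h₁)).trans
              (FamCat.pullback_condition_apply x))
      _ = FamCat.algebraAct hX.meets M _ (pullback.snd _ f x) h₂ :=
          FamCat.algebraAct_algebraAct hX.meets h₁ h₂
      _ = hom.left y' :=
          FamCat.algebraAct_congr (congrArg Quotient.out hy'₁.symm) hy'₂.symm _ _)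

end Descend

section EssSurj

variable {X : Type u} [Preorder X] [HasPullbacks (FamCat X)] {A B : FamCat X} {f : A ⟶ B}

theorem FamCat.recoversCompatibleFamilies_of_essSurj (hm : LocallyBinaryMeets X)
    (hE : (Monad.comparison (Over.mapPullbackAdj f)).EssSurj) :
    FamCat.RecoversCompatibleFamilies f := by
  intro σ hσ hc j s hs m hmj
  obtain ⟨D, ⟨e⟩⟩ := hE.mem_essImage (FamCat.subfamilyAlgebra hm hσ hc)
  exact FamCat.equivLE_of_pullback_iso hm hσ ((Monad.forget _).mapIso e) hs hmj

theorem FamCat.essSurj_comparison (hX : LocallyComplete X)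
    (hrec : FamCat.RecoversCompatibleFamilies f) :
    (Monad.comparison (Over.mapPullbackAdj f)).EssSurj :=
  ⟨fun M => ⟨FamCat.descend M hX, ⟨FamCat.comparisonDescendIso M hX hrec⟩⟩⟩

end EssSurj

/-- **Lemma (Prezado).** For `X` locally complete, a morphism `f : (α_j) ⟶ (β_k)` in
`Fam(X)` is an effective descent morphism iff it is a descent morphism and every descent
datum `(σ_j) ≤ (α_j)` (i.e. `σ_j ∧ α_i ≅ α_j ∧ σ_i` for `i, j` in the same fibre) satisfies
`α_j ∧ ⋁_{i ∈ f⁻¹(k)} σ_i ≅ σ_j`, joins and meets computed in the relevant down-sets. -/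
theorem statement8 {X : Type u} [Preorder X] (hX : LocallyComplete X)
    {A B : FamCat X} (f : A ⟶ B) :
    @IsEffectiveDescentMorphism (FamCat X) _ (FamCat.hasPullbacks hX.meets) _ _ f ↔
      (@IsDescentMorphism (FamCat X) _ (FamCat.hasPullbacks hX.meets) _ _ f ∧
        ∀ σ : A.idx → X, (∀ j, σ j ≤ A.val j) →
          (∀ i j : A.idx, FamCat.app f i = FamCat.app f j →
            ∀ m m' : X, IsMeet (σ j) (A.val i) m → IsMeet (A.val j) (σ i) m' →
              EquivLE m m') →
          ∀ j : A.idx, ∀ s : X,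
            IsLocalJoin (B.val (FamCat.app f j))
              {x | ∃ i : A.idx, FamCat.app f i = FamCat.app f j ∧ x = σ i} s →
            ∀ m : X, IsMeet (A.val j) s m → EquivLE m (σ j)) := by
  have := FamCat.hasPullbacks hX.meets
  constructor
  · intro h
    exact ⟨⟨h.full, h.faithful⟩, FamCat.recoversCompatibleFamilies_of_essSurj hX.meets h.essSurj⟩
  · rintro ⟨⟨hfull, hfaithful⟩, hrec⟩
    exact { full := hfull, faithful := hfaithful, essSurj := FamCat.essSurj_comparison hX hrec }

end Desc
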